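/- arXiv:2106.02534 — 2 statements merged into one kernel-verified Lean document; each statement's English description precedes it below -/
import Mathlib

section
/- For every integer n ≥ 5, the number of cyclic permutations of length n avoiding all three cyclic patterns [1234], [1243], and [1342] equals 2; that is, #Av_n([1234],[1243],[1342]) = 2. -/
/-- A sequence `σ` of length `n` (with distinct values) contains the pattern `π`
of length `k` if some subsequence of `σ` is order isomorphic to `π`. -/
def ContainsPat {n k : ℕ} (σ : Fin n → Fin n) (π : Fin k → ℕ) : Prop :=
  ∃ f : Fin k → Fin n, StrictMono f ∧ ∀ i j : Fin k, π i < π j ↔ σ (f i) < σ (f j)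

/-- The rotation of the sequence `σ` starting at position `r`. -/
def rotSeq {n : ℕ} (σ : Fin n → Fin n) (r : Fin n) : Fin n → Fin n :=
  fun i => σ (i + r)

/-- The cyclic permutation `[σ]` contains the cyclic pattern `[π]` if some
rotation of `σ` contains `π` linearly. -/
def CycContains {n k : ℕ} (σ : Fin n → Fin n) (π : Fin k → ℕ) : Prop :=
  ∃ r : Fin n, ContainsPat (rotSeq σ r) π

/-- The cyclic permutation `[σ]` avoids the cyclic pattern `[π]`. -/
def CycAvoids {n k : ℕ} (σ : Fin n → Fin n) (π : Fin k → ℕ) : Prop :=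
  ¬ CycContains σ π

/-- The cyclic permutation `[σ]`, i.e. the set of all rotations of `σ`. -/
def CycClass {n : ℕ} (σ : Fin n → Fin n) : Set (Fin n → Fin n) :=
  Set.range (rotSeq σ)

/-- The set of cyclic permutations (rotation classes) of length `n` all of whose
representatives are permutations and which satisfy the (rotation-invariant)
predicate `P`. -/
def AvClasses (n : ℕ) (P : (Fin n → Fin n) → Prop) : Set (Set (Fin n → Fin n)) :=
  { C | ∃ σ : Equiv.Perm (Fin n), C = CycClass ⇑σ ∧ P ⇑σ }

/-- The cyclic descent number: the number of indices `i` (mod `n`) with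
`σ i > σ (i+1)`. -/
def cdes {n : ℕ} (σ : Fin n → Fin n) : ℕ :=
  (Finset.univ.filter fun i : Fin n =>
    σ ⟨(↑i + 1) % n, Nat.mod_lt _ i.pos⟩ < σ i).card

/-- The cyclic peak number: the number of indices `i` (mod `n`) with
`σ (i-1) < σ i > σ (i+1)`. -/
def cpk {n : ℕ} (σ : Fin n → Fin n) : ℕ :=
  (Finset.univ.filter fun i : Fin n =>
    σ ⟨(↑i + (n - 1)) % n, Nat.mod_lt _ i.pos⟩ < σ i ∧
    σ ⟨(↑i + 1) % n, Nat.mod_lt _ i.pos⟩ < σ i).card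

/-!
Rotate `σ` so that its maximum `m` comes last. Then `[1234]` forbids an increasing triple before
it, and `[1243]`, `[1342]` forbid `σ a < σ 0` whenever `σ a < σ b` with `0 < a < b < m` (the
entries at positions `0, a, b, m` form `2134` or `3124`). Hence `σ` is strictly decreasing between
the positions `0` and `m`. If moreover `0 < σ 0 < m - 1`, the entries `0, σ 0, m - 1` together
with `1` or `2`, read cyclically from the position of `0`, form `[1342]` or `[1243]`. So `σ 0` is
`0` or `m - 1`, which leaves the classes of `0, m-1, …, 1, m` and of the decreasing permutation.
Both avoid the three patterns: an occurrence of any of them would start with an increasing triple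
whose first entry is also below the fourth.
-/

open Function

variable {n k : ℕ}

lemma rotSeq_rotSeq (σ : Fin n → Fin n) (r s : Fin n) :
    rotSeq (rotSeq σ r) s = rotSeq σ (s + r) := by
  funext i
  simp only [rotSeq, add_assoc]

lemma Fin.val_sub_eq_or (a b : Fin n) :
    ((b : ℕ) ≤ a ∧ ((a - b : Fin n) : ℕ) = a - b) ∨
      ((a : ℕ) < b ∧ ((a - b : Fin n) : ℕ) = n + a - b) := by
  rcases le_or_gt b a with h | h
  · exact .inl ⟨h, Fin.coe_sub_iff_le.mpr h⟩
  · exact .inr ⟨h, Fin.coe_sub_iff_lt.mpr h⟩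

lemma strictMono_fin_four {α : Type*} [Preorder α] {f : Fin 4 → α}
    (h₁ : f 0 < f 1) (h₂ : f 1 < f 2) (h₃ : f 2 < f 3) : StrictMono f :=
  Fin.strictMono_iff_lt_succ.mpr fun i => by fin_cases i <;> assumption

lemma containsPat_of_strictMono_comp {σ : Fin n → Fin n} {π : Fin k → ℕ} (f : Fin k → Fin n)
    (ρ : Fin k → Fin k) (hρ : Surjective ρ) (hπ : StrictMono (π ∘ ρ)) (hf : StrictMono f)
    (hσ : StrictMono (σ ∘ f ∘ ρ)) : ContainsPat σ π := by
  refine ⟨f, hf, fun i j => ?_⟩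
  obtain ⟨i, rfl⟩ := hρ i
  obtain ⟨j, rfl⟩ := hρ j
  exact hπ.lt_iff_lt.trans hσ.lt_iff_lt.symm

section Rotation

variable [NeZero n]

lemma rotSeq_zero (σ : Fin n → Fin n) : rotSeq σ 0 = σ := by
  funext i
  simp only [rotSeq, add_zero]

lemma cycContains_rotSeq_iff (σ : Fin n → Fin n) (r : Fin n) (π : Fin k → ℕ) :
    CycContains (rotSeq σ r) π ↔ CycContains σ π := by
  constructor
  · rintro ⟨s, hs⟩
    exact ⟨s + r, by rwa [rotSeq_rotSeq] at hs⟩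
  · rintro ⟨s, hs⟩
    exact ⟨s - r, by rwa [rotSeq_rotSeq, sub_add_cancel]⟩

lemma cycClass_rotSeq (σ : Fin n → Fin n) (r : Fin n) : CycClass (rotSeq σ r) = CycClass σ := by
  ext τ
  constructor
  · rintro ⟨s, rfl⟩
    exact ⟨s + r, (rotSeq_rotSeq σ r s).symm⟩
  · rintro ⟨s, rfl⟩
    exact ⟨s - r, by rw [rotSeq_rotSeq, sub_add_cancel]⟩

/-- `StrictMono fun i => x i - x 0` says that the positions `x i` are met in this order when going
once around the cycle from `x 0`. -/
lemma cycContains_iff {σ : Fin n → Fin n} {π : Fin (k + 1) → ℕ} :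
    CycContains σ π ↔ ∃ x : Fin (k + 1) → Fin n,
      StrictMono (fun i => x i - x 0) ∧ ∀ i j, π i < π j ↔ σ (x i) < σ (x j) := by
  constructor
  · rintro ⟨r, f, hf, hπ⟩
    refine ⟨fun i => f i + r, fun i j hij => ?_, hπ⟩
    have hi := Fin.le_def.mp (hf.monotone (Fin.zero_le i))
    have hj := Fin.le_def.mp (hf.monotone (Fin.zero_le j))
    have := Fin.lt_def.mp (hf hij)
    simp only [add_sub_add_right_eq_sub, Fin.lt_def]
    rcases Fin.val_sub_eq_or (f i) (f 0) with h | h <;>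
      rcases Fin.val_sub_eq_or (f j) (f 0) with h' | h' <;> omega
  · rintro ⟨x, hx, hπ⟩
    refine ⟨x 0, fun i => x i - x 0, hx, fun i j => ?_⟩
    simpa only [rotSeq, sub_add_cancel] using hπ i j

lemma cycContains_of_containsPat_rotate {σ : Fin n → Fin n} {π π' : Fin (k + 1) → ℕ}
    (s : Fin (k + 1)) (hs : ∀ i, π' i = π (i + s)) (h : ContainsPat σ π') :
    CycContains σ π := by
  obtain ⟨f, hf, hπ⟩ := h
  refine cycContains_iff.mpr ⟨fun i => f (i - s), fun i j hij => ?_, fun i j => ?_⟩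
  · have hi := hf.lt_iff_lt (a := i - s) (b := 0 - s)
    have hj := hf.lt_iff_lt (a := j - s) (b := 0 - s)
    have hij' := hf.lt_iff_lt (a := i - s) (b := j - s)
    have := Fin.lt_def.mp hij
    simp only [Fin.lt_def, iff_iff_implies_and_implies] at hi hj hij' ⊢
    rcases Fin.val_sub_eq_or i s with h₁ | h₁ <;> rcases Fin.val_sub_eq_or j s with h₂ | h₂ <;>
      rcases Fin.val_sub_eq_or 0 s with h₃ | h₃ <;>
      rcases Fin.val_sub_eq_or (f (i - s)) (f (0 - s)) with h₄ | h₄ <;>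
      rcases Fin.val_sub_eq_or (f (j - s)) (f (0 - s)) with h₅ | h₅ <;>
      simp only [Fin.val_zero] at h₃ <;> omega
  · simpa only [hs, sub_add_cancel] using hπ (i - s) (j - s)

lemma cycAvoids_of_forall {σ : Fin n → Fin n} {π : Fin 4 → ℕ}
    (hπ : π 0 < π 1 ∧ π 1 < π 2 ∧ π 0 < π 3)
    (h : ∀ p₀ p₁ p₂ p₃ : Fin n, 0 < p₁ - p₀ → p₁ - p₀ < p₂ - p₀ → p₂ - p₀ < p₃ - p₀ →
      σ p₀ < σ p₁ → σ p₁ < σ p₂ → σ p₃ ≤ σ p₀) :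
    CycAvoids σ π := by
  intro hc
  obtain ⟨x, hx, hxπ⟩ := cycContains_iff.mp hc
  have h₁ : 0 < x 1 - x 0 := by simpa only [sub_self] using hx (show (0 : Fin 4) < 1 by decide)
  exact (h _ _ _ _ h₁ (hx (by decide)) (hx (by decide)) ((hxπ 0 1).mp hπ.1)
    ((hxπ 1 2).mp hπ.2.1)).not_gt ((hxπ 0 3).mp hπ.2.2)

end Rotation

lemma val_add_sub_le_of_strictAntiOn {f : Fin n → Fin n} {i j : Fin n}
    (hf : StrictAntiOn f (Set.Icc i j)) (hij : i ≤ j) : (f j : ℕ) + (j - i) ≤ f i := by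
  obtain ⟨d, hd⟩ : ∃ d, (j : ℕ) = i + d := ⟨j - i, by rw [Fin.le_def] at hij; omega⟩
  induction d generalizing j with
  | zero => rw [Fin.ext (show j.val = i.val by omega)]; omega
  | succ d ih =>
    have hj' : (i : ℕ) + d < n := by omega
    have hlt : (⟨i + d, hj'⟩ : Fin n) < j := Fin.lt_def.mpr (by simp only; omega)
    have hle : i ≤ ⟨i + d, hj'⟩ := Fin.le_def.mpr (by simp only; omega)
    have hstep := Fin.lt_def.mp <| hf ⟨hle, hlt.le⟩ ⟨hij, le_rfl⟩ hlt
    have := ih (hf.mono (Set.Icc_subset_Icc_right hlt.le)) hle rfl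
    simp only at hstep this
    omega

variable {m : ℕ}

lemma Fin.mem_Ioo_zero_last_iff {i : Fin (m + 1)} :
    i ∈ Set.Ioo 0 (Fin.last m) ↔ 0 < (i : ℕ) ∧ (i : ℕ) < m := by
  simp only [Set.mem_Ioo, Fin.lt_def, Fin.val_zero, Fin.val_last]

lemma val_bounds_of_strictAntiOn {f : Fin (m + 1) → Fin (m + 1)} (hm : 2 ≤ m)
    (hf : StrictAntiOn f (Set.Ioo 0 (Fin.last m))) {i : Fin (m + 1)}
    (hi : i ∈ Set.Ioo 0 (Fin.last m)) :
    (f ⟨m - 1, by omega⟩ : ℕ) + (m - 1 - i) ≤ f i ∧ (f i : ℕ) + (i - 1) ≤ f ⟨1, by omega⟩ := by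
  rw [Fin.mem_Ioo_zero_last_iff] at hi
  constructor
  · refine val_add_sub_le_of_strictAntiOn (j := ⟨m - 1, by omega⟩) (hf.mono fun j hj => ?_)
      (Fin.le_def.mpr (by simp only; omega))
    simp only [Set.mem_Icc, Fin.le_def, Fin.mem_Ioo_zero_last_iff] at hj ⊢
    omega
  · refine val_add_sub_le_of_strictAntiOn (i := ⟨1, by omega⟩) (hf.mono fun j hj => ?_)
      (Fin.le_def.mpr (by simp only; omega))
    simp only [Set.mem_Icc, Fin.le_def, Fin.mem_Ioo_zero_last_iff] at hj ⊢
    omega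

/-- The sequence `0, m-1, m-2, …, 1, m`. -/
def revInner (m : ℕ) : Equiv.Perm (Fin (m + 1)) :=
  (Equiv.swap 0 (Fin.last m)).trans Fin.revPerm

lemma val_revInner (i : Fin (m + 1)) :
    ((i : ℕ) = 0 ∧ (revInner m i : ℕ) = 0) ∨ ((i : ℕ) = m ∧ (revInner m i : ℕ) = m) ∨
      (0 < (i : ℕ) ∧ (i : ℕ) < m ∧ (revInner m i : ℕ) = m - i) := by
  simp only [revInner, Equiv.trans_apply, Equiv.swap_apply_def, Fin.revPerm_apply]
  have := i.isLt
  split_ifs with h₀ hm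
  · subst h₀
    simp
  · subst hm
    simp
  · rw [Fin.ext_iff] at h₀ hm
    simp only [Fin.val_rev, Fin.val_zero, Fin.val_last] at h₀ hm ⊢
    omega

lemma cycAvoids_revPerm {π : Fin 4 → ℕ} (hπ : π 0 < π 1 ∧ π 1 < π 2 ∧ π 0 < π 3) :
    CycAvoids (Fin.revPerm : Fin (m + 1) → Fin (m + 1)) π := by
  refine cycAvoids_of_forall hπ fun p₀ p₁ p₂ p₃ h₁ h₂ _ h₀₁ h₁₂ => ?_
  rw [Fin.lt_def] at h₁ h₂ h₀₁ h₁₂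
  simp only [Fin.revPerm_apply, Fin.val_rev, Fin.val_zero] at h₁ h₀₁ h₁₂
  rcases Fin.val_sub_eq_or p₁ p₀ with h | h <;> rcases Fin.val_sub_eq_or p₂ p₀ with h' | h' <;>
    omega

lemma cycAvoids_revInner {π : Fin 4 → ℕ} (hπ : π 0 < π 1 ∧ π 1 < π 2 ∧ π 0 < π 3) :
    CycAvoids (revInner m) π := by
  refine cycAvoids_of_forall hπ fun p₀ p₁ p₂ p₃ h₁ h₂ h₃ h₀₁ h₁₂ => ?_
  rw [Fin.lt_def] at h₁ h₂ h₃ h₀₁ h₁₂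
  rw [Fin.le_def]
  simp only [Fin.val_zero] at h₁
  have := val_revInner p₀
  have := val_revInner p₁
  have := val_revInner p₂
  have := val_revInner p₃
  have := Fin.val_sub_eq_or p₁ p₀
  have := Fin.val_sub_eq_or p₂ p₀
  have := Fin.val_sub_eq_or p₃ p₀
  omega

section Normalized

variable {σ : Equiv.Perm (Fin (m + 1))} (hσ : σ (Fin.last m) = Fin.last m)
include hσ

lemma apply_lt_apply_last {i : Fin (m + 1)} (hi : i < Fin.last m) : σ i < σ (Fin.last m) := by
  rw [hσ, Fin.lt_last_iff_ne_last, ← hσ]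
  exact σ.injective.ne hi.ne

lemma val_apply_lt {i : Fin (m + 1)} (hi : i < Fin.last m) : (σ i : ℕ) < m := by
  simpa only [hσ, Fin.lt_def, Fin.val_last] using apply_lt_apply_last hσ hi

lemma not_lt_of_cycAvoids_1234 (h1234 : CycAvoids σ ![1,2,3,4]) {i j k : Fin (m + 1)}
    (hij : i < j) (hjk : j < k) (hk : k < Fin.last m) (h₁ : σ i < σ j) : ¬ σ j < σ k := by
  intro h₂
  refine h1234 ⟨0, ?_⟩
  rw [rotSeq_zero]
  exact containsPat_of_strictMono_comp ![i, j, k, Fin.last m] id surjective_id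
    (strictMono_fin_four (by decide) (by decide) (by decide)) (strictMono_fin_four hij hjk hk)
    (strictMono_fin_four h₁ h₂ (apply_lt_apply_last hσ hk))

lemma apply_zero_lt_of_cycAvoids (h1243 : CycAvoids σ ![1,2,4,3])
    (h1342 : CycAvoids σ ![1,3,4,2]) {a b : Fin (m + 1)} (ha : 0 < a) (hab : a < b)
    (hb : b < Fin.last m) (h : σ a < σ b) : σ 0 < σ a := by
  by_contra! hle
  have ha0 : σ a < σ 0 := hle.lt_of_ne (σ.injective.ne ha.ne')
  have hpos : StrictMono ![0, a, b, Fin.last m] := strictMono_fin_four ha hab hb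
  rcases lt_or_gt_of_ne (σ.injective.ne (ha.trans hab).ne) with h0b | hb0
  · exact h1342 <| cycContains_of_containsPat_rotate (π' := ![2,1,3,4]) 3 (by decide) <|
      containsPat_of_strictMono_comp _ ![1,0,2,3] (by decide)
        (strictMono_fin_four (by decide) (by decide) (by decide)) hpos
        (strictMono_fin_four ha0 h0b (apply_lt_apply_last hσ hb))
  · exact h1243 <| cycContains_of_containsPat_rotate (π' := ![3,1,2,4]) 3 (by decide) <|
      containsPat_of_strictMono_comp _ ![1,2,0,3] (by decide)
        (strictMono_fin_four (by decide) (by decide) (by decide)) hpos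
        (strictMono_fin_four h hb0 (apply_lt_apply_last hσ (ha.trans (hab.trans hb))))

lemma strictAntiOn_of_cycAvoids (h1234 : CycAvoids σ ![1,2,3,4])
    (h1243 : CycAvoids σ ![1,2,4,3]) (h1342 : CycAvoids σ ![1,3,4,2]) :
    StrictAntiOn σ (Set.Ioo 0 (Fin.last m)) := by
  intro a ha b hb hab
  by_contra! hle
  have h : σ a < σ b := hle.lt_of_ne (σ.injective.ne hab.ne)
  exact not_lt_of_cycAvoids_1234 hσ h1234 ha.1 hab hb.2
    (apply_zero_lt_of_cycAvoids hσ h1243 h1342 ha.1 hab hb.2 h) h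

lemma symm_mem_Ioo {v : Fin (m + 1)} (hv₀ : σ 0 ≠ v) (hv : v ≠ Fin.last m) :
    σ.symm v ∈ Set.Ioo 0 (Fin.last m) := by
  refine ⟨Fin.pos_iff_ne_zero.mpr fun h => hv₀ ?_, Fin.lt_last_iff_ne_last.mpr fun h => hv ?_⟩
  · rw [← h, σ.apply_symm_apply]
  · rw [← σ.apply_symm_apply v, h, hσ]

lemma symm_lt_symm (hanti : StrictAntiOn σ (Set.Ioo 0 (Fin.last m))) {u v : Fin (m + 1)}
    (hu : σ 0 ≠ u) (hv₀ : σ 0 ≠ v) (hv : v ≠ Fin.last m) (huv : u < v) : σ.symm v < σ.symm u :=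
  (hanti.lt_iff_gt (symm_mem_Ioo hσ hu (huv.trans_le (Fin.le_last v)).ne)
    (symm_mem_Ioo hσ hv₀ hv)).mp (by simpa only [Equiv.apply_symm_apply] using huv)

lemma val_apply_zero_of_cycAvoids (hm : 4 ≤ m) (h1234 : CycAvoids σ ![1,2,3,4])
    (h1243 : CycAvoids σ ![1,2,4,3]) (h1342 : CycAvoids σ ![1,3,4,2]) :
    (σ 0 : ℕ) = 0 ∨ (σ 0 : ℕ) = m - 1 := by
  have hanti := strictAntiOn_of_cycAvoids hσ h1234 h1243 h1342
  have ha := val_apply_lt hσ (i := 0)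
    (Fin.lt_def.mpr (by simp only [Fin.val_last, Fin.val_zero]; omega))
  by_contra! h
  -- Read cyclically from the position of `0`, the values `0, σ 0, m - 1, v` form `[1243]`
  -- (if `σ 0 = 1`, `v = 2`) or `[1342]` (if `v = 1 < σ 0`).
  obtain ⟨v, hv⟩ : ∃ v : ℕ, ((σ 0 : ℕ) = 1 ∧ v = 2) ∨ (1 < (σ 0 : ℕ) ∧ v = 1) :=
    ⟨if (σ 0 : ℕ) = 1 then 2 else 1, by split_ifs <;> omega⟩
  obtain ⟨vmid, hvmid⟩ : ∃ w : Fin (m + 1), (w : ℕ) = v := ⟨⟨v, by omega⟩, rfl⟩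
  obtain ⟨vtop, hvtop⟩ : ∃ w : Fin (m + 1), (w : ℕ) = m - 1 := ⟨⟨m - 1, by omega⟩, rfl⟩
  have hne (w : Fin (m + 1)) (hw : (w : ℕ) ≠ σ 0) : σ 0 ≠ w := Fin.ne_of_val_ne hw.symm
  have hlast (w : Fin (m + 1)) (hw : (w : ℕ) < m) : w ≠ Fin.last m :=
    Fin.ne_of_val_ne (by simp only [Fin.val_last]; omega)
  have hpos : StrictMono ![0, σ.symm vtop, σ.symm vmid, σ.symm 0] := strictMono_fin_four
    (symm_mem_Ioo hσ (hne _ (by omega)) (hlast _ (by omega))).1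
    (symm_lt_symm hσ hanti (hne _ (by omega)) (hne _ (by omega)) (hlast _ (by omega))
      (Fin.lt_def.mpr (by omega)))
    (symm_lt_symm hσ hanti (hne _ (by simp only [Fin.val_zero]; omega)) (hne _ (by omega))
      (hlast _ (by omega)) (Fin.lt_def.mpr (by simp only [Fin.val_zero]; omega)))
  have hval (w : Fin (m + 1)) : σ (σ.symm w) = w := σ.apply_symm_apply w
  rcases hv with ⟨h1, rfl⟩ | ⟨h1, rfl⟩
  · refine h1243 <| cycContains_of_containsPat_rotate (π' := ![2,4,3,1]) 1 (by decide) <|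
      containsPat_of_strictMono_comp _ ![3,0,2,1] (by decide)
        (strictMono_fin_four (by decide) (by decide) (by decide)) hpos
        (strictMono_fin_four ?_ ?_ ?_) <;>
      simp only [comp_apply, Matrix.cons_val, hval, Fin.lt_def, Fin.val_zero] <;> omega
  · refine h1342 <| cycContains_of_containsPat_rotate (π' := ![3,4,2,1]) 1 (by decide) <|
      containsPat_of_strictMono_comp _ ![3,2,0,1] (by decide)
        (strictMono_fin_four (by decide) (by decide) (by decide)) hpos
        (strictMono_fin_four ?_ ?_ ?_) <;>
      simp only [comp_apply, Matrix.cons_val, hval, Fin.lt_def, Fin.val_zero] <;> omega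

lemma val_apply_add_eq_of_val_apply_zero_eq_zero (hm : 2 ≤ m)
    (hanti : StrictAntiOn σ (Set.Ioo 0 (Fin.last m))) (h0 : (σ 0 : ℕ) = 0) {i : Fin (m + 1)}
    (hi : i ∈ Set.Ioo 0 (Fin.last m)) : (σ i : ℕ) + i = m := by
  have hbounds := val_bounds_of_strictAntiOn hm hanti hi
  have h₁ := val_apply_lt hσ (i := ⟨1, by omega⟩)
    (Fin.lt_def.mpr (by simp only [Fin.val_last]; omega))
  have h₂ : (σ ⟨m - 1, by omega⟩ : ℕ) ≠ σ 0 :=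
    Fin.val_ne_of_ne (σ.injective.ne (Fin.ne_of_val_ne (by simp only [Fin.val_zero]; omega)))
  rw [Fin.mem_Ioo_zero_last_iff] at hi
  omega

lemma val_apply_add_eq_of_val_apply_zero_eq (hm : 2 ≤ m)
    (hanti : StrictAntiOn σ (Set.Ioo 0 (Fin.last m))) (h0 : (σ 0 : ℕ) = m - 1) {i : Fin (m + 1)}
    (hi : i ∈ Set.Ioo 0 (Fin.last m)) : (σ i : ℕ) + i = m - 1 := by
  have hbounds := val_bounds_of_strictAntiOn hm hanti hi
  have h₁ := val_apply_lt hσ (i := ⟨1, by omega⟩)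
    (Fin.lt_def.mpr (by simp only [Fin.val_last]; omega))
  have h₂ : (σ ⟨1, by omega⟩ : ℕ) ≠ σ 0 :=
    Fin.val_ne_of_ne (σ.injective.ne (Fin.ne_of_val_ne (by simp only [Fin.val_zero]; omega)))
  rw [Fin.mem_Ioo_zero_last_iff] at hi
  omega

end Normalized

lemma val_rotSeq_revPerm_one (i : Fin (m + 1)) :
    (rotSeq Fin.revPerm 1 i : ℕ) = if i = Fin.last m then m else m - 1 - i := by
  simp only [rotSeq, Fin.revPerm_apply, Fin.val_rev, Fin.val_add_one]
  split_ifs <;> omega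

lemma eq_revInner_or_eq_rotSeq_revPerm {σ : Equiv.Perm (Fin (m + 1))}
    (hσ : σ (Fin.last m) = Fin.last m) (hm : 4 ≤ m) (h1234 : CycAvoids σ ![1,2,3,4])
    (h1243 : CycAvoids σ ![1,2,4,3]) (h1342 : CycAvoids σ ![1,3,4,2]) :
    ⇑σ = revInner m ∨ ⇑σ = rotSeq Fin.revPerm 1 := by
  have hanti := strictAntiOn_of_cycAvoids hσ h1234 h1243 h1342
  rcases val_apply_zero_of_cycAvoids hσ hm h1234 h1243 h1342 with h0 | h0
  · refine .inl (funext fun i => Fin.ext ?_)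
    rcases val_revInner i with ⟨hi, hv⟩ | ⟨hi, hv⟩ | ⟨hi₀, him, hv⟩
    · obtain rfl : i = 0 := Fin.ext hi
      rw [hv, h0]
    · obtain rfl : i = Fin.last m := Fin.ext hi
      rw [hv, hσ, Fin.val_last]
    · have := val_apply_add_eq_of_val_apply_zero_eq_zero hσ (by omega) hanti h0
        (Fin.mem_Ioo_zero_last_iff.mpr ⟨hi₀, him⟩)
      omega
  · refine .inr (funext fun i => Fin.ext ?_)
    rw [val_rotSeq_revPerm_one]
    split_ifs with hi
    · rw [hi, hσ, Fin.val_last]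
    · rcases eq_or_ne (i : ℕ) 0 with hi₀ | hi₀
      · obtain rfl : i = 0 := Fin.ext hi₀
        rw [h0, hi₀, Nat.sub_zero]
      · have him : (i : ℕ) < m := by
          have := Fin.val_ne_of_ne hi
          simp only [Fin.val_last] at this
          omega
        have := val_apply_add_eq_of_val_apply_zero_eq hσ (by omega) hanti h0
          (Fin.mem_Ioo_zero_last_iff.mpr ⟨by omega, him⟩)
        omega

lemma cycClass_eq_of_cycAvoids (hm : 4 ≤ m) (σ : Equiv.Perm (Fin (m + 1)))
    (h1234 : CycAvoids σ ![1,2,3,4]) (h1243 : CycAvoids σ ![1,2,4,3])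
    (h1342 : CycAvoids σ ![1,3,4,2]) :
    CycClass σ = CycClass Fin.revPerm ∨ CycClass σ = CycClass (revInner m) := by
  set r := σ.symm (Fin.last m) + 1
  set τ := (Equiv.addRight r).trans σ
  have hτ : ⇑τ = rotSeq σ r := rfl
  have hτ_last : τ (Fin.last m) = Fin.last m := by
    change σ (Fin.last m + (σ.symm (Fin.last m) + 1)) = _
    rw [add_left_comm, Fin.last_add_one, add_zero, Equiv.apply_symm_apply]
  have hτ_avoids {π : Fin 4 → ℕ} (h : CycAvoids σ π) : CycAvoids τ π :=
    hτ ▸ mt (cycContains_rotSeq_iff σ r π).mp h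
  rw [← cycClass_rotSeq σ r, ← hτ]
  rcases eq_revInner_or_eq_rotSeq_revPerm hτ_last hm (hτ_avoids h1234) (hτ_avoids h1243)
    (hτ_avoids h1342) with h | h
  · exact .inr (by rw [h])
  · exact .inl (by rw [h, cycClass_rotSeq])

lemma cycClass_revPerm_ne_revInner (hm : 2 ≤ m) :
    CycClass (Fin.revPerm : Fin (m + 1) → Fin (m + 1)) ≠ CycClass (revInner m) := by
  intro h
  obtain ⟨s, hs⟩ : ⇑(revInner m) ∈ CycClass Fin.revPerm := h ▸ ⟨0, rotSeq_zero _⟩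
  have h₀ := congrFun hs 0
  simp only [rotSeq, zero_add, Fin.revPerm_apply, revInner, Equiv.trans_apply,
    Equiv.swap_apply_left, Fin.rev_last] at h₀
  obtain rfl : s = Fin.last m := by rw [← Fin.rev_rev s, h₀, Fin.rev_zero]
  have h₁ := congrArg Fin.val (congrFun hs ⟨1, by omega⟩)
  have v₁ := val_revInner (⟨1, by omega⟩ : Fin (m + 1))
  simp only [rotSeq, Fin.revPerm_apply, Fin.val_rev, Fin.val_add_eq_ite, Fin.val_last,
    if_pos (show m + 1 ≤ 1 + m by omega)] at h₁ v₁
  omega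

theorem card_av_1234_1243_1342 (n : ℕ) (hn : 5 ≤ n) :
    (AvClasses n fun σ => CycAvoids σ ![1,2,3,4] ∧ CycAvoids σ ![1,2,4,3] ∧ CycAvoids σ ![1,3,4,2]).ncard = 2 := by
  obtain ⟨m, rfl⟩ : ∃ m, n = m + 1 := ⟨n - 1, by omega⟩
  suffices (AvClasses (m + 1) fun σ => CycAvoids σ ![1,2,3,4] ∧ CycAvoids σ ![1,2,4,3] ∧
      CycAvoids σ ![1,3,4,2]) = {CycClass Fin.revPerm, CycClass (revInner m)} by
    rw [this]
    exact Set.ncard_pair (cycClass_revPerm_ne_revInner (by omega))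
  ext C
  simp only [AvClasses, Set.mem_ofPred_eq, Set.mem_insert_iff, Set.mem_singleton_iff]
  constructor
  · rintro ⟨σ, rfl, h1234, h1243, h1342⟩
    exact cycClass_eq_of_cycAvoids (by omega) σ h1234 h1243 h1342
  · rintro (rfl | rfl)
    · exact ⟨_, rfl, cycAvoids_revPerm (by decide), cycAvoids_revPerm (by decide),
        cycAvoids_revPerm (by decide)⟩
    · exact ⟨_, rfl, cycAvoids_revInner (by decide), cycAvoids_revInner (by decide),
        cycAvoids_revInner (by decide)⟩
end

section
/- For every integer n ≥ 3, the joint generating polynomial of the cyclic descent number and the cyclic peak number over cyclic permutations of length n avoiding both cyclic patterns [1234] and [1342] satisfies Σ_{[σ] ∈ Av_n([1234],[1342])} q^{cdes[σ]} t^{cpk[σ]} = q^{n−2} t + (2n−6) q^{n−2} t^2 + q^{n−1} t. -/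
/-!
Normalise a rotation class by its rotation starting with the smallest value `0`. A cyclic
occurrence of a pattern of length four is a sorted quadruple of positions carrying some rotation
of the pattern; since position `0` holds the minimum, `[σ]` contains `[1234]` or `[1342]` exactly
when the tail `σ 1, …, σ (n-1)` contains `123`, `231` or `4213`. Avoiding `123` and `231` makes
the tail two decreasing runs, the first one ending in `1`; avoiding `4213` forces the rest of the
first run to lie entirely below or entirely above the second run. These are the `n - 1` words
`lowHighFun n p` and the `n - 3` words `highLowFun n p`, whose cyclic descents and peaks are read
off directly.
-/

section Rotation

theorem add_mod_eq_ite {x r n : ℕ} (hx : x < n) (hr : r < n) :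
    (x + r) % n = if x + r < n then x + r else x + r - n := by
  split_ifs with h
  · exact Nat.mod_eq_of_lt h
  · rw [Nat.mod_eq_sub_mod (by omega), Nat.mod_eq_of_lt (by omega)]

theorem add_sub_mod_eq_ite {x y n : ℕ} (hx : x < n) (hy : y < n) :
    (x + n - y) % n = if y ≤ x then x - y else x + n - y := by
  split_ifs with h
  · rw [show x + n - y = x - y + n by omega, Nat.add_mod_right, Nat.mod_eq_of_lt (by omega)]
  · exact Nat.mod_eq_of_lt (by omega)

theorem strictMono_vecCons4 {a b c d : ℕ} (hab : a < b) (hbc : b < c) (hcd : c < d) :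
    StrictMono ![a, b, c, d] := by
  rw [Fin.strictMono_iff_lt_succ]
  intro i
  fin_cases i <;> simpa

variable {n : ℕ} {q : Fin 4 → ℕ}

theorem exists_strictMono_rotate {r : ℕ} (hq : StrictMono q) (hqn : q 3 < n) (hr : r < n) :
    ∃ s : Fin 4, StrictMono fun t => (q (t + s) + r) % n := by
  have h01 : q 0 < q 1 := hq (by decide)
  have h12 : q 1 < q 2 := hq (by decide)
  have h23 : q 2 < q 3 := hq (by decide)
  simp only [Fin.strictMono_iff_lt_succ,
    add_mod_eq_ite (lt_of_le_of_lt (hq.monotone (Fin.le_last _)) hqn) hr]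
  -- The entries that wrap around past `n` come first; `s` is minus their number.
  obtain ⟨s, hs⟩ : ∃ s : Fin 4, s = if q 3 + r < n then 0 else if q 2 + r < n then 3
      else if q 1 + r < n then 2 else if q 0 + r < n then 1 else 0 := ⟨_, rfl⟩
  refine ⟨s, fun i => ?_⟩
  split_ifs at hs <;> subst hs <;> fin_cases i <;> simp <;> split_ifs <;> omega

theorem strictMono_rotate_sub (hq : StrictMono q) (hqn : q 3 < n) (s : Fin 4) :
    StrictMono fun t => (q (t + s) + n - q s) % n := by
  have h01 : q 0 < q 1 := hq (by decide)
  have h12 : q 1 < q 2 := hq (by decide)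
  have h23 : q 2 < q 3 := hq (by decide)
  have hlt : ∀ i, q i < n := fun i => lt_of_le_of_lt (hq.monotone (Fin.le_last i)) hqn
  simp only [Fin.strictMono_iff_lt_succ, add_sub_mod_eq_ite (hlt _) (hlt s)]
  intro i
  fin_cases s <;> fin_cases i <;> simp <;> split_ifs <;> omega

theorem cycContains_iff_exists_rotation {σ : Fin n → Fin n} {f : ℕ → ℕ}
    (hf : ∀ i : Fin n, (σ i : ℕ) = f i) (π : Fin 4 → ℕ) :
    CycContains σ π ↔ ∃ q : Fin 4 → ℕ, StrictMono q ∧ q 3 < n ∧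
      ∃ s : Fin 4, ∀ i j, π i < π j ↔ f (q (i + s)) < f (q (j + s)) := by
  constructor
  · rintro ⟨r, g, hg, hiso⟩
    obtain ⟨s, hs⟩ := exists_strictMono_rotate (q := fun i => (g i : ℕ)) hg (g 3).isLt r.isLt
    refine ⟨_, hs, Nat.mod_lt _ r.pos, -s, fun i j => ?_⟩
    simp only [hiso i j, rotSeq, Fin.lt_def, hf, Fin.val_add, neg_add_cancel_right]
  · rintro ⟨q, hq, hqn, s, hiso⟩
    have hlt : ∀ i, q i < n := fun i => lt_of_le_of_lt (hq.monotone (Fin.le_last i)) hqn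
    have hrot : ∀ t, ((q (t + s) + n - q s) % n + q s) % n = q (t + s) := fun t => by
      rw [Nat.mod_add_mod, Nat.sub_add_cancel (by have := hlt s; omega), Nat.add_mod_right,
        Nat.mod_eq_of_lt (hlt _)]
    refine ⟨⟨q s, hlt s⟩, fun t => ⟨(q (t + s) + n - q s) % n, Nat.mod_lt _ (hlt s).pos⟩,
      fun a b hab => strictMono_rotate_sub hq hqn s hab, fun i j => ?_⟩
    simp only [hiso i j, rotSeq, Fin.lt_def, hf, Fin.val_add, hrot]

end Rotation

structure TailAvoids (n : ℕ) (u : ℕ → ℕ) : Prop where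
  not123 : ∀ x y z, 0 < x → x < y → y < z → z < n → ¬(u x < u y ∧ u y < u z)
  not231 : ∀ x y z, 0 < x → x < y → y < z → z < n → ¬(u z < u x ∧ u x < u y)
  not4213 : ∀ w x y z, 0 < w → w < x → x < y → y < z → z < n →
    ¬(u y < u x ∧ u x < u z ∧ u z < u w)

section TailReduction

variable {n : ℕ} {σ : Fin n → Fin n} {f : ℕ → ℕ}

theorem tailAvoids_of_cycAvoids (hf : ∀ i : Fin n, (σ i : ℕ) = f i)
    (hmin : ∀ i, 0 < i → i < n → f 0 < f i) (h1234 : CycAvoids σ ![1, 2, 3, 4])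
    (h1342 : CycAvoids σ ![1, 3, 4, 2]) : TailAvoids n f where
  not123 x y z hx hxy hyz hz h := h1234 <| (cycContains_iff_exists_rotation hf _).2
    ⟨![0, x, y, z], strictMono_vecCons4 hx hxy hyz, hz, 0, by
      have := hmin x hx (by omega)
      intro i j; fin_cases i <;> fin_cases j <;> simp <;> omega⟩
  not231 x y z hx hxy hyz hz h := h1342 <| (cycContains_iff_exists_rotation hf _).2
    ⟨![0, x, y, z], strictMono_vecCons4 hx hxy hyz, hz, 0, by
      have := hmin z (by omega) hz
      intro i j; fin_cases i <;> fin_cases j <;> simp <;> omega⟩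
  not4213 w x y z hw hwx hxy hyz hz h := h1342 <| (cycContains_iff_exists_rotation hf _).2
    ⟨![w, x, y, z], strictMono_vecCons4 hwx hxy hyz, hz, 2, by
      intro i j; fin_cases i <;> fin_cases j <;> simp <;> omega⟩

/-- The two chains are the orders in which the `s`-th rotations of `1234` and of `1342` visit the
quadruple. -/
theorem TailAvoids.not_rotation_chain (ht : TailAvoids n f)
    (hmin : ∀ i, 0 < i → i < n → f 0 < f i) {q : Fin 4 → ℕ} (hq : StrictMono q)
    (hqn : q 3 < n) (s : Fin 4) :
    ¬(f (q s) < f (q (1 + s)) ∧ f (q (1 + s)) < f (q (2 + s)) ∧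
        f (q (2 + s)) < f (q (3 + s))) ∧
      ¬(f (q s) < f (q (3 + s)) ∧ f (q (3 + s)) < f (q (1 + s)) ∧
        f (q (1 + s)) < f (q (2 + s))) := by
  have h01 : q 0 < q 1 := hq (by decide)
  have h12 : q 1 < q 2 := hq (by decide)
  have h23 : q 2 < q 3 := hq (by decide)
  have m2 : q 0 = 0 → f (q 0) < f (q 2) := fun h0 => h0 ▸ hmin _ (by omega) (by omega)
  have m3 : q 0 = 0 → f (q 0) < f (q 3) := fun h0 => h0 ▸ hmin _ (by omega) (by omega)
  -- Each chain either puts a value below `f (q 0)`, impossible when `q 0 = 0`, or contains one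
  -- of the forbidden tail patterns.
  have t1 := ht.not123 (q 1) (q 2) (q 3) (by omega) h12 h23 hqn
  have t2 := ht.not231 (q 1) (q 2) (q 3) (by omega) h12 h23 hqn
  rcases Nat.eq_zero_or_pos (q 0) with h0 | h0
  · fin_cases s <;> simp <;> omega
  · have t3 := ht.not123 (q 0) (q 1) (q 2) h0 h01 h12 (by omega)
    have t4 := ht.not231 (q 0) (q 1) (q 2) h0 h01 h12 (by omega)
    have t5 := ht.not4213 (q 0) (q 1) (q 2) (q 3) h0 h01 h12 h23 hqn
    fin_cases s <;> simp <;> omega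

theorem TailAvoids.cycAvoids (ht : TailAvoids n f) (hf : ∀ i : Fin n, (σ i : ℕ) = f i)
    (hmin : ∀ i, 0 < i → i < n → f 0 < f i) :
    CycAvoids σ ![1, 2, 3, 4] ∧ CycAvoids σ ![1, 3, 4, 2] := by
  constructor <;> intro hc <;>
    obtain ⟨q, hq, hqn, s, hiso⟩ := (cycContains_iff_exists_rotation hf _).1 hc
  · refine (ht.not_rotation_chain hmin hq hqn s).1 ⟨?_, ?_, ?_⟩
    · simpa using (hiso 0 1).1 (by decide)
    · simpa using (hiso 1 2).1 (by decide)
    · simpa using (hiso 2 3).1 (by decide)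
  · refine (ht.not_rotation_chain hmin hq hqn s).2 ⟨?_, ?_, ?_⟩
    · simpa using (hiso 0 3).1 (by decide)
    · simpa using (hiso 3 1).1 (by decide)
    · simpa using (hiso 1 2).1 (by decide)

end TailReduction

theorem eq_self_of_lt_succ {n : ℕ} {v : ℕ → ℕ} (hv : ∀ i, i + 1 < n → v i < v (i + 1))
    (hvn : ∀ i < n, v i < n) {i : ℕ} (hi : i < n) : v i = i := by
  have chain : ∀ j < n, ∀ i ≤ j, v i + (j - i) ≤ v j := by
    intro j
    induction j with
    | zero => intro _ i hi; simp [Nat.le_zero.1 hi]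
    | succ j ih =>
      intro hj i hij
      rcases Nat.lt_or_ge j i with h | h
      · obtain rfl : i = j + 1 := by omega
        simp
      · have := ih (by omega) i h
        have := hv j hj
        omega
  have := chain i hi 0 (Nat.zero_le i)
  have := chain (n - 1) (by omega) i (by omega)
  have := hvn (n - 1) (by omega)
  omega

/-- The word `0, p, p - 1, …, 1, n - 1, n - 2, …, p + 1`. -/
def lowHighFun (n p i : ℕ) : ℕ := if i = 0 then 0 else if i ≤ p then p + 1 - i else n + p - i

/-- The word `0, n - 1, n - 2, …, n - p + 1, 1, n - p, …, 2`. -/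
def highLowFun (n p i : ℕ) : ℕ :=
  if i = 0 then 0 else if i < p then n - i else if i = p then 1 else n + 1 - i

def highLowInv (n p v : ℕ) : ℕ :=
  if v = 0 then 0 else if v = 1 then p else if v ≤ n - p then n + 1 - v else n - v

section Families

variable {n p i : ℕ}

theorem lowHighFun_of_le (hi : 0 < i) (hip : i ≤ p) : lowHighFun n p i = p + 1 - i := by
  simp [lowHighFun, hi.ne', hip]

theorem lowHighFun_of_lt (hpi : p < i) : lowHighFun n p i = n + p - i := by
  simp [lowHighFun, show i ≠ 0 by omega, show ¬i ≤ p by omega]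

theorem lowHighFun_lt (hpn : p < n) (hi : i < n) : lowHighFun n p i < n := by
  unfold lowHighFun; split_ifs <;> omega

theorem lowHighFun_lowHighFun (hi : i < n) :
    lowHighFun n p (lowHighFun n p i) = i := by
  unfold lowHighFun; split_ifs <;> omega

theorem highLowFun_lt (hp0 : 0 < p) (hpn : p < n) (hi : i < n) : highLowFun n p i < n := by
  unfold highLowFun; split_ifs <;> omega

theorem highLowInv_of_le (hi : 2 ≤ i) (hip : i ≤ n - p) : highLowInv n p i = n + 1 - i := by
  simp [highLowInv, show i ≠ 0 by omega, show i ≠ 1 by omega, hip]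

theorem highLowInv_of_lt (hpn : p < n) (hi : n - p < i) : highLowInv n p i = n - i := by
  simp [highLowInv, show i ≠ 0 by omega, show i ≠ 1 by omega, show ¬i ≤ n - p by omega]

theorem highLowInv_lt (hpn : p < n) (hi : i < n) : highLowInv n p i < n := by
  unfold highLowInv; split_ifs <;> omega

theorem highLowInv_highLowFun (hpn : p < n) (hi : i < n) :
    highLowInv n p (highLowFun n p i) = i := by
  unfold highLowFun highLowInv; grind

theorem highLowFun_highLowInv (hp0 : 0 < p) (hi : i < n) :
    highLowFun n p (highLowInv n p i) = i := by
  unfold highLowFun highLowInv; grind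

theorem tailAvoids_lowHighFun (n p : ℕ) : TailAvoids n (lowHighFun n p) where
  not123 x y z hx hxy hyz hz := by unfold lowHighFun; split_ifs <;> omega
  not231 x y z hx hxy hyz hz := by unfold lowHighFun; split_ifs <;> omega
  not4213 w x y z hw hwx hxy hyz hz := by unfold lowHighFun; split_ifs <;> omega

theorem tailAvoids_highLowFun (n p : ℕ) : TailAvoids n (highLowFun n p) where
  not123 x y z hx hxy hyz hz := by unfold highLowFun; split_ifs <;> omega
  not231 x y z hx hxy hyz hz := by unfold highLowFun; split_ifs <;> omega
  not4213 w x y z hw hwx hxy hyz hz := by unfold highLowFun; split_ifs <;> omega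

end Families

section Classification

variable {n p : ℕ} {u : ℕ → ℕ}

theorem eq_lowHighFun (hp0 : 0 < p) (hpn : p < n) (h0 : u 0 = 0) (hp : u p = 1)
    (hlt : ∀ i < n, u i < n) (hL : StrictAntiOn u (Set.Ioc 0 p))
    (hR : StrictAntiOn u (Set.Ioo p n)) (hjoin : p + 1 < n → u 1 < u (n - 1))
    {i : ℕ} (hi : i < n) : u i = lowHighFun n p i := by
  -- `u` increases along the positions listed by the involution `lowHighFun n p`.
  have hsorted : ∀ j < n, u (lowHighFun n p j) = j := by
    refine fun j hj => eq_self_of_lt_succ (v := fun j => u (lowHighFun n p j)) (fun j hj => ?_)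
      (fun j hj => hlt _ (lowHighFun_lt hpn hj)) hj
    rcases Nat.lt_trichotomy j p with hjp | rfl | hjp
    · rcases Nat.eq_zero_or_pos j with rfl | hj0
      · simp [lowHighFun, h0, hp, Nat.one_le_iff_ne_zero.2 hp0.ne']
      · rw [lowHighFun_of_le hj0 hjp.le, lowHighFun_of_le (by omega) hjp]
        exact hL ⟨by omega, by omega⟩ ⟨by omega, by omega⟩ (by omega)
    · rw [lowHighFun_of_le hp0 le_rfl, lowHighFun_of_lt (Nat.lt_succ_self _),
        Nat.add_sub_cancel_left, show n + j - (j + 1) = n - 1 by omega]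
      exact hjoin hj
    · rw [lowHighFun_of_lt hjp, lowHighFun_of_lt (by omega)]
      exact hR ⟨by omega, by omega⟩ ⟨by omega, by omega⟩ (by omega)
  rw [← lowHighFun_lowHighFun hi, hsorted _ (lowHighFun_lt hpn hi), lowHighFun_lowHighFun hi]

theorem eq_highLowFun (h2p : 2 ≤ p) (hpn : p + 2 ≤ n) (h0 : u 0 = 0) (hp : u p = 1)
    (hlt : ∀ i < n, u i < n) (hL : StrictAntiOn u (Set.Ioc 0 p))
    (hR : StrictAntiOn u (Set.Ioo p n)) (hlast : 1 < u (n - 1))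
    (hjoin : u (p + 1) < u (p - 1)) {i : ℕ} (hi : i < n) : u i = highLowFun n p i := by
  have hsorted : ∀ j < n, u (highLowInv n p j) = j := by
    refine fun j hj => eq_self_of_lt_succ (v := fun j => u (highLowInv n p j)) (fun j hj => ?_)
      (fun j hj => hlt _ (highLowInv_lt (by omega) hj)) hj
    rcases Nat.lt_or_ge j 2 with hj2 | hj2
    · interval_cases j
      · simp [highLowInv, h0, hp]
      · rw [highLowInv_of_le le_rfl (by omega)]
        simpa [highLowInv, hp] using hlast
    rcases Nat.lt_trichotomy j (n - p) with hjp | rfl | hjp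
    · rw [highLowInv_of_le hj2 hjp.le, highLowInv_of_le (by omega) hjp]
      exact hR ⟨by omega, by omega⟩ ⟨by omega, by omega⟩ (by omega)
    · rw [highLowInv_of_le hj2 le_rfl, highLowInv_of_lt (by omega) (by omega),
        show n + 1 - (n - p) = p + 1 by omega, show n - (n - p + 1) = p - 1 by omega]
      exact hjoin
    · rw [highLowInv_of_lt (by omega) hjp, highLowInv_of_lt (by omega) (by omega)]
      exact hL ⟨by omega, by omega⟩ ⟨by omega, by omega⟩ (by omega)
  have hpn' : p < n := by omega
  rw [← highLowInv_highLowFun hpn' hi, hsorted _ (highLowFun_lt (by omega) hpn' hi),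
    highLowInv_highLowFun hpn' hi]

theorem TailAvoids.strictAntiOn_Ioc (ht : TailAvoids n u) (hp : u p = 1) (hpn : p < n)
    (hone : ∀ x, 0 < x → x < n → x ≠ p → 1 < u x)
    (hinj : ∀ x < n, ∀ y < n, u x = u y → x = y) :
    StrictAntiOn u (Set.Ioc 0 p) := by
  rintro x ⟨hx, -⟩ y ⟨-, hyp⟩ hxy
  have hux := hone x hx (by omega) (by omega)
  rcases Nat.eq_or_lt_of_le hyp with rfl | hyp
  · omega
  · have := ht.not231 x y p hx hxy hyp hpn
    have := hinj x (by omega) y (by omega)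
    omega

theorem TailAvoids.strictAntiOn_Ioo (ht : TailAvoids n u) (hp : u p = 1) (hp0 : 0 < p)
    (hone : ∀ x, 0 < x → x < n → x ≠ p → 1 < u x)
    (hinj : ∀ x < n, ∀ y < n, u x = u y → x = y) :
    StrictAntiOn u (Set.Ioo p n) := by
  rintro x ⟨hpx, -⟩ y ⟨-, hyn⟩ hxy
  have := hone x (by omega) (by omega) (by omega)
  have := ht.not123 p x y hp0 hpx hxy hyn
  have := hinj x (by omega) y (by omega)
  omega

theorem TailAvoids.apply_succ_lt_apply_pred (ht : TailAvoids n u) (hp : u p = 1)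
    (hone : ∀ x, 0 < x → x < n → x ≠ p → 1 < u x)
    (hinj : ∀ x < n, ∀ y < n, u x = u y → x = y)
    (h2p : 2 ≤ p) (hpn : p + 2 ≤ n) (hlast : u (n - 1) < u 1) : u (p + 1) < u (p - 1) := by
  by_contra! hlt
  have hne := hinj (p + 1) (by omega) (p - 1) (by omega)
  have hmid : u (p - 1) < u (n - 1) := by
    rcases Nat.eq_or_lt_of_le (show p + 1 ≤ n - 1 by omega) with h | h
    · rw [← h]; omega
    · have := ht.not231 (p - 1) (p + 1) (n - 1) (by omega) (by omega) h (by omega)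
      have := hinj (p - 1) (by omega) (n - 1) (by omega)
      omega
  rcases Nat.eq_or_lt_of_le (show 1 ≤ p - 1 by omega) with h | h
  · rw [← h] at hmid; omega
  · exact ht.not4213 1 (p - 1) p (n - 1) one_pos h (by omega) (by omega) (by omega)
      ⟨by have := hone (p - 1) (by omega) (by omega) (by omega); omega, hmid, hlast⟩

theorem TailAvoids.eq_lowHighFun_or_eq_highLowFun (ht : TailAvoids n u) (h0 : u 0 = 0)
    (hp : u p = 1) (hpn : p < n) (hlt : ∀ i < n, u i < n)
    (hinj : ∀ x < n, ∀ y < n, u x = u y → x = y) :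
    (∀ i < n, u i = lowHighFun n p i) ∨
      2 ≤ p ∧ p + 2 ≤ n ∧ ∀ i < n, u i = highLowFun n p i := by
  have hp0 : 0 < p := Nat.pos_of_ne_zero fun h => by simp [h, h0] at hp
  have hone : ∀ x, 0 < x → x < n → x ≠ p → 1 < u x := fun x hx hxn hxp => by
    have := hinj x hxn 0 (by omega)
    have := hinj x hxn p hpn
    omega
  have hL := ht.strictAntiOn_Ioc hp hpn hone hinj
  have hR := ht.strictAntiOn_Ioo hp hp0 hone hinj
  by_cases hB : p + 1 < n ∧ u (n - 1) < u 1
  · obtain ⟨hpn', hlt1⟩ := hB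
    have hlast := hone (n - 1) (by omega) (by omega) (by omega)
    have h2p : 2 ≤ p := by
      by_contra h
      obtain rfl : p = 1 := by omega
      omega
    exact Or.inr ⟨h2p, by omega, fun i => eq_highLowFun h2p (by omega) h0 hp hlt hL hR hlast
      (ht.apply_succ_lt_apply_pred hp hone hinj h2p (by omega) hlt1)⟩
  · refine Or.inl fun i => eq_lowHighFun hp0 hpn h0 hp hlt hL hR fun hpn' => ?_
    have := hinj 1 (by omega) (n - 1) (by omega)
    have := fun h => hB ⟨hpn', h⟩
    omega

end Classification

def permOfNat (n : ℕ) (f g : ℕ → ℕ) (hf : ∀ i < n, f i < n) (hg : ∀ i < n, g i < n)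
    (hgf : ∀ i < n, g (f i) = i) (hfg : ∀ i < n, f (g i) = i) : Equiv.Perm (Fin n) where
  toFun i := ⟨f i, hf i i.2⟩
  invFun i := ⟨g i, hg i i.2⟩
  left_inv i := Fin.ext (hgf i i.2)
  right_inv i := Fin.ext (hfg i i.2)

/-- The identity is a junk value for `p ≥ n`. -/
def lowHigh (n p : ℕ) : Equiv.Perm (Fin n) :=
  if h : p < n then
    permOfNat n (lowHighFun n p) (lowHighFun n p) (fun _ => lowHighFun_lt h)
      (fun _ => lowHighFun_lt h) (fun _ => lowHighFun_lowHighFun)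
      (fun _ => lowHighFun_lowHighFun)
  else 1

/-- The identity is a junk value for `p = 0` or `p ≥ n`. -/
def highLow (n p : ℕ) : Equiv.Perm (Fin n) :=
  if h : 0 < p ∧ p < n then
    permOfNat n (highLowFun n p) (highLowInv n p) (fun _ => highLowFun_lt h.1 h.2)
      (fun _ => highLowInv_lt h.2) (fun _ => highLowInv_highLowFun h.2)
      (fun _ => highLowFun_highLowInv h.1)
  else 1

theorem lowHigh_apply {n p : ℕ} (h : p < n) (i : Fin n) :
    (lowHigh n p i : ℕ) = lowHighFun n p i := by
  rw [lowHigh, dif_pos h]; rfl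

theorem highLow_apply {n p : ℕ} (hp0 : 0 < p) (hpn : p < n) (i : Fin n) :
    (highLow n p i : ℕ) = highLowFun n p i := by
  rw [highLow, dif_pos ⟨hp0, hpn⟩]; rfl

section Statistics

open Finset

variable {n : ℕ} {σ : Fin n → Fin n} {f : ℕ → ℕ}

theorem cdes_eq_card_filter_range (hf : ∀ i : Fin n, (σ i : ℕ) = f i) :
    cdes σ = #{i ∈ range n | f ((i + 1) % n) < f i} := by
  rw [cdes, card_filter, card_filter, ← Fin.sum_univ_eq_sum_range]
  simp only [Fin.lt_def, hf]

theorem cpk_eq_card_filter_range (hf : ∀ i : Fin n, (σ i : ℕ) = f i) :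
    cpk σ = #{i ∈ range n | f ((i + (n - 1)) % n) < f i ∧ f ((i + 1) % n) < f i} := by
  rw [cpk, card_filter, card_filter, ← Fin.sum_univ_eq_sum_range]
  simp only [Fin.lt_def, hf]

theorem add_one_mod_eq_ite {i : ℕ} (hi : i < n) :
    (i + 1) % n = if i + 1 = n then 0 else i + 1 := by
  split_ifs with h
  · rw [h, Nat.mod_self]
  · exact Nat.mod_eq_of_lt (by omega)

theorem add_sub_one_mod_eq_ite {i : ℕ} (hi : i < n) :
    (i + (n - 1)) % n = if i = 0 then n - 1 else i - 1 := by
  split_ifs with h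
  · rw [h, zero_add, Nat.mod_eq_of_lt (by omega)]
  · rw [show i + (n - 1) = i - 1 + n by omega, Nat.add_mod_right, Nat.mod_eq_of_lt (by omega)]

/-- The cyclic successor and predecessor appear as `if`s rather than `% n`, which `omega` cannot
evaluate. -/
theorem cdes_eq_sub_card (hf : ∀ i : Fin n, (σ i : ℕ) = f i) {s : Finset ℕ}
    (hs : ∀ i < n, i ∈ s ↔ ¬f (if i + 1 = n then 0 else i + 1) < f i) (hsn : s ⊆ range n) :
    cdes σ = n - #s := by
  have hs' : s = {i ∈ range n | ¬ f ((i + 1) % n) < f i} := by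
    ext i
    by_cases hi : i < n
    · simp [hs i hi, hi, add_one_mod_eq_ite hi]
    · simp only [mem_filter, mem_range, hi, false_and, iff_false]
      exact fun h => hi (mem_range.1 (hsn h))
  have := card_filter_add_card_filter_not (s := range n) fun i => f ((i + 1) % n) < f i
  rw [cdes_eq_card_filter_range hf, hs']
  simp only [card_range] at this
  omega

theorem cpk_eq_card (hf : ∀ i : Fin n, (σ i : ℕ) = f i) {s : Finset ℕ}
    (hs : ∀ i < n, i ∈ s ↔ f (if i = 0 then n - 1 else i - 1) < f i ∧
      f (if i + 1 = n then 0 else i + 1) < f i) (hsn : s ⊆ range n) :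
    cpk σ = #s := by
  rw [cpk_eq_card_filter_range hf]
  congr 1
  ext i
  by_cases hi : i < n
  · simp [hs i hi, hi, add_one_mod_eq_ite hi, add_sub_one_mod_eq_ite hi]
  · simp only [mem_filter, mem_range, hi, false_and, false_iff]
    exact fun h => hi (mem_range.1 (hsn h))

end Statistics

section FamilyStatistics

open Finset

variable {n p : ℕ}

theorem cdes_lowHigh (hp0 : 0 < p) (hpn : p + 1 < n) : cdes ⇑(lowHigh n p) = n - 2 := by
  rw [cdes_eq_sub_card (lowHigh_apply (by omega)) (s := {0, p}) (fun i hi => ?_)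
    (by simp [insert_subset_iff]; omega), card_pair hp0.ne]
  simp only [mem_insert, mem_singleton, lowHighFun]
  split_ifs <;> first | contradiction | omega

theorem cdes_lowHigh_sub_one (hn : 2 ≤ n) : cdes ⇑(lowHigh n (n - 1)) = n - 1 := by
  rw [cdes_eq_sub_card (lowHigh_apply (by omega)) (s := {0}) (fun i hi => ?_)
    (by simp; omega), card_singleton]
  simp only [mem_singleton, lowHighFun]
  split_ifs <;> first | contradiction | omega

theorem cdes_highLow (hp0 : 0 < p) (hpn : p + 1 < n) : cdes ⇑(highLow n p) = n - 2 := by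
  rw [cdes_eq_sub_card (highLow_apply hp0 (by omega)) (s := {0, p}) (fun i hi => ?_)
    (by simp [insert_subset_iff]; omega), card_pair hp0.ne]
  simp only [mem_insert, mem_singleton, highLowFun]
  split_ifs <;> first | contradiction | omega

theorem cpk_lowHigh_one (hn : 3 ≤ n) : cpk ⇑(lowHigh n 1) = 1 := by
  rw [cpk_eq_card (lowHigh_apply (by omega)) (s := {2}) (fun i hi => ?_)
    (by simp; omega), card_singleton]
  simp only [mem_singleton, lowHighFun]
  split_ifs <;> first | contradiction | omega

theorem cpk_lowHigh (h2p : 2 ≤ p) (hpn : p + 2 ≤ n) : cpk ⇑(lowHigh n p) = 2 := by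
  rw [cpk_eq_card (lowHigh_apply (by omega)) (s := {1, p + 1}) (fun i hi => ?_)
    (by simp [insert_subset_iff]; omega), card_pair (by omega)]
  simp only [mem_insert, mem_singleton, lowHighFun]
  split_ifs <;> first | contradiction | omega

theorem cpk_lowHigh_sub_one (hn : 3 ≤ n) : cpk ⇑(lowHigh n (n - 1)) = 1 := by
  rw [cpk_eq_card (lowHigh_apply (by omega)) (s := {1}) (fun i hi => ?_)
    (by simp; omega), card_singleton]
  simp only [mem_singleton, lowHighFun]
  split_ifs <;> first | contradiction | omega

theorem cpk_highLow (h2p : 2 ≤ p) (hpn : p + 2 ≤ n) : cpk ⇑(highLow n p) = 2 := by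
  rw [cpk_eq_card (highLow_apply (by omega) (by omega)) (s := {1, p + 1}) (fun i hi => ?_)
    (by simp [insert_subset_iff]; omega), card_pair (by omega)]
  simp only [mem_insert, mem_singleton, highLowFun]
  split_ifs <;> first | contradiction | omega

end FamilyStatistics

section Enumeration

open Finset

def normalizedAvoiders (n : ℕ) : Finset (Equiv.Perm (Fin n)) :=
  (Icc 1 (n - 1)).image (lowHigh n) ∪ (Icc 2 (n - 2)).image (highLow n)

theorem mem_normalizedAvoiders_iff {n : ℕ} (hn : 3 ≤ n) (σ : Equiv.Perm (Fin n)) :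
    σ ∈ normalizedAvoiders n ↔
      σ ⟨0, Nat.zero_lt_of_lt hn⟩ = ⟨0, Nat.zero_lt_of_lt hn⟩ ∧
        CycAvoids ⇑σ ![1, 2, 3, 4] ∧ CycAvoids ⇑σ ![1, 3, 4, 2] := by
  simp only [normalizedAvoiders, mem_union, mem_image, mem_Icc]
  constructor
  · rintro (⟨p, hp, rfl⟩ | ⟨p, hp, rfl⟩)
    · have hf := lowHigh_apply (n := n) (p := p) (by omega)
      refine ⟨Fin.ext (by simp [hf, lowHighFun]), (tailAvoids_lowHighFun n p).cycAvoids hf ?_⟩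
      intro i hi hin; simp only [lowHighFun]; split_ifs <;> omega
    · have hf := highLow_apply (n := n) (p := p) (by omega) (by omega)
      refine ⟨Fin.ext (by simp [hf, highLowFun]), (tailAvoids_highLowFun n p).cycAvoids hf ?_⟩
      intro i hi hin; simp only [highLowFun]; split_ifs <;> omega
  · rintro ⟨h0, h1234, h1342⟩
    obtain ⟨u, hf⟩ : ∃ u : ℕ → ℕ, ∀ i : Fin n, (σ i : ℕ) = u i :=
      ⟨fun i => if h : i < n then σ ⟨i, h⟩ else 0, fun i => by simp⟩
    have hu0 : u 0 = 0 := by rw [← hf ⟨0, Nat.zero_lt_of_lt hn⟩, h0]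
    have hlt : ∀ i < n, u i < n := fun i hi => hf ⟨i, hi⟩ ▸ (σ _).2
    have hinj : ∀ x < n, ∀ y < n, u x = u y → x = y := fun x hx y hy h => by
      rw [← hf ⟨x, hx⟩, ← hf ⟨y, hy⟩] at h
      simpa using σ.injective (Fin.ext h)
    have hmin : ∀ i, 0 < i → i < n → u 0 < u i := fun i hi hin => by
      have := hinj i hin 0 (by omega)
      omega
    set p := (σ.symm ⟨1, by omega⟩ : ℕ)
    have hp : u p = 1 := by rw [← hf, Equiv.apply_symm_apply]
    have hpn : p < n := (σ.symm _).2
    have hp0 : 0 < p := Nat.pos_of_ne_zero fun h => by simp [h, hu0] at hp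
    rcases (tailAvoids_of_cycAvoids hf hmin h1234 h1342).eq_lowHighFun_or_eq_highLowFun hu0 hp
      hpn hlt hinj with hA | ⟨h2p, hpn2, hB⟩
    · exact Or.inl ⟨p, ⟨hp0, by omega⟩, Equiv.ext fun i => Fin.ext <| by
        rw [lowHigh_apply hpn, hf, hA i i.2]⟩
    · exact Or.inr ⟨p, ⟨h2p, by omega⟩, Equiv.ext fun i => Fin.ext <| by
        rw [highLow_apply hp0 hpn, hf, hB i i.2]⟩

theorem lowHigh_injOn (n : ℕ) : Set.InjOn (lowHigh n) (Icc 1 (n - 1) : Set ℕ) := by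
  intro p hp p' hp' h
  simp only [coe_Icc, Set.mem_Icc] at hp hp'
  have := congrArg (fun σ : Equiv.Perm (Fin n) => (σ ⟨1, by omega⟩ : ℕ)) h
  simp only [lowHigh_apply (show p < n by omega), lowHigh_apply (show p' < n by omega),
    lowHighFun_of_le one_pos hp.1, lowHighFun_of_le one_pos hp'.1] at this
  omega

theorem highLow_injOn (n : ℕ) : Set.InjOn (highLow n) (Icc 2 (n - 2) : Set ℕ) := by
  intro p hp p' hp' h
  simp only [coe_Icc, Set.mem_Icc] at hp hp'
  have := congrArg (fun σ : Equiv.Perm (Fin n) => (σ ⟨p, by omega⟩ : ℕ)) h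
  simp only [highLow_apply (show 0 < p by omega) (show p < n by omega),
    highLow_apply (show 0 < p' by omega) (show p' < n by omega)] at this
  have hself : highLowFun n p p = 1 := by simp [highLowFun, show p ≠ 0 by omega]
  rw [hself, highLowFun] at this
  split_ifs at this <;> omega

theorem disjoint_image_lowHigh_highLow (n : ℕ) :
    Disjoint ((Icc 1 (n - 1)).image (lowHigh n)) ((Icc 2 (n - 2)).image (highLow n)) := by
  simp only [disjoint_left, mem_image, mem_Icc, not_exists, not_and]
  rintro _ ⟨p, hp, rfl⟩ p' hp' h
  have h1 := congrArg (fun σ : Equiv.Perm (Fin n) => (σ ⟨1, by omega⟩ : ℕ)) h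
  have h2 := congrArg (fun σ : Equiv.Perm (Fin n) => (σ ⟨n - 1, by omega⟩ : ℕ)) h
  simp only [lowHigh_apply (show p < n by omega),
    highLow_apply (show 0 < p' by omega) (show p' < n by omega), lowHighFun, highLowFun] at h1 h2
  split_ifs at h1 h2 <;> omega

open MvPolynomial in
theorem sum_Icc_lowHigh {n : ℕ} (hn : 3 ≤ n) :
    ∑ p ∈ Icc 1 (n - 1), (X 0 : MvPolynomial (Fin 2) ℤ) ^ cdes ⇑(lowHigh n p) *
      X 1 ^ cpk ⇑(lowHigh n p) =
    X 0 ^ (n - 2) * X 1 + (n - 3 : ℕ) • (X 0 ^ (n - 2) * X 1 ^ 2) + X 0 ^ (n - 1) * X 1 := by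
  have hIcc : Icc 1 (n - 1) = insert 1 (insert (n - 1) (Icc 2 (n - 2))) := by
    ext p; simp only [mem_Icc, mem_insert]; omega
  have hmid : ∀ p ∈ Icc 2 (n - 2), (X 0 : MvPolynomial (Fin 2) ℤ) ^ cdes ⇑(lowHigh n p) *
      X 1 ^ cpk ⇑(lowHigh n p) = X 0 ^ (n - 2) * X 1 ^ 2 := fun p hp => by
    rw [mem_Icc] at hp
    rw [cdes_lowHigh (by omega) (by omega), cpk_lowHigh hp.1 (by omega)]
  rw [hIcc, sum_insert (by simp; omega), sum_insert (by simp; omega), sum_congr rfl hmid,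
    sum_const, Nat.card_Icc, cdes_lowHigh one_pos (by omega), cpk_lowHigh_one hn,
    cdes_lowHigh_sub_one (by omega), cpk_lowHigh_sub_one hn, show n - 2 + 1 - 2 = n - 3 by omega]
  ring

open MvPolynomial in
theorem sum_Icc_highLow (n : ℕ) :
    ∑ p ∈ Icc 2 (n - 2), (X 0 : MvPolynomial (Fin 2) ℤ) ^ cdes ⇑(highLow n p) *
      X 1 ^ cpk ⇑(highLow n p) = (n - 3 : ℕ) • (X 0 ^ (n - 2) * X 1 ^ 2) := by
  have hmid : ∀ p ∈ Icc 2 (n - 2), (X 0 : MvPolynomial (Fin 2) ℤ) ^ cdes ⇑(highLow n p) *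
      X 1 ^ cpk ⇑(highLow n p) = X 0 ^ (n - 2) * X 1 ^ 2 := fun p hp => by
    rw [mem_Icc] at hp
    rw [cdes_highLow (by omega) (by omega), cpk_highLow hp.1 (by omega)]
  rw [sum_congr rfl hmid, sum_const, Nat.card_Icc, show n - 2 + 1 - 2 = n - 3 by omega]

end Enumeration

/-- Here `q = X 0`, `t = X 1`, and each rotation class is represented by its rotation starting
with the smallest value. -/
theorem cdes_cpk_poly_av_1234_1342 (n : ℕ) (hn : 3 ≤ n) :
    (∑ᶠ σ ∈ {σ : Equiv.Perm (Fin n) | σ ⟨0, by omega⟩ = ⟨0, by omega⟩ ∧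
        CycAvoids ⇑σ ![1,2,3,4] ∧ CycAvoids ⇑σ ![1,3,4,2]},
      (MvPolynomial.X 0 : MvPolynomial (Fin 2) ℤ) ^ cdes ⇑σ *
        MvPolynomial.X 1 ^ cpk ⇑σ) =
    MvPolynomial.X 0 ^ (n - 2) * MvPolynomial.X 1
      + MvPolynomial.C (2 * (n : ℤ) - 6) * MvPolynomial.X 0 ^ (n - 2) *
          MvPolynomial.X 1 ^ 2
      + MvPolynomial.X 0 ^ (n - 1) * MvPolynomial.X 1 := by
  rw [show {σ : Equiv.Perm (Fin n) | _} = ↑(normalizedAvoiders n) from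
      Set.ext fun σ => (mem_normalizedAvoiders_iff hn σ).symm, finsum_mem_coe_finset,
    normalizedAvoiders,
    Finset.sum_union (disjoint_image_lowHigh_highLow n), Finset.sum_image (lowHigh_injOn n),
    Finset.sum_image (highLow_injOn n), sum_Icc_lowHigh hn, sum_Icc_highLow,
    show 2 * (n : ℤ) - 6 = ((n - 3 : ℕ) : ℤ) * 2 by omega]
  simp only [nsmul_eq_mul, map_mul, map_natCast, map_ofNat]
  ring
end
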